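/- Let S and A be finite nonempty sets, let p (true dynamics) and p̂ (learned model) be dynamics kernels, let π_D and π be policies, ρ0 an initial state distribution, r a reward bounded by r_max ≥ 0, γ ∈ (0,1), and k ∈ ℕ. Suppose (i) for every timestep t, the expectation over (s,a) drawn from the time-t state-action marginal of the new policy π under p of TV(p(·|s,a), p̂(·|s,a)) is at most ε_{m'}, and (ii) max_s TV(π_D(·|s), π(·|s)) ≤ ε_π. Let η^branch[π] denote the return of the k-branched process that runs policy π under the model p̂ for the first k timesteps and policy π_D under the true dynamics p thereafter. Then η[π] ≥ η^branch[π] − 2·r_max·[ γ^{k+1}·ε_π/(1−γ)² + γ^k·ε_π/(1−γ) + k·ε_{m'}/(1−γ) ], where η[π] is the return of π under p. -/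

import Mathlib

open scoped BigOperators

/-- Total variation distance between two probability mass functions on a finite type. -/
noncomputable def tv {X : Type*} [Fintype X] (q1 q2 : PMF X) : ℝ :=
  (1 / 2) * ∑ x, |(q1 x).toReal - (q2 x).toReal|

/-- Total variation distance between two real-valued distributions on a finite type. -/
noncomputable def tvFun {X : Type*} [Fintype X] (d1 d2 : X → ℝ) : ℝ :=
  (1 / 2) * ∑ x, |d1 x - d2 x|

/-- Time-`t` state-action marginal of a (possibly time-varying) policy/dynamics pair,
started from initial state distribution `ρ0`:  `d⁰(s,a) = ρ0(s)·π₀(a|s)` and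
`d^{t+1}(s,a) = Σ_{s',a'} d^t(s',a')·p_t(s|s',a')·π_{t+1}(a|s)`. -/
noncomputable def marginal {S A : Type*} [Fintype S] [Fintype A]
    (ρ0 : PMF S) (πseq : ℕ → S → PMF A) (pseq : ℕ → S × A → PMF S) :
    ℕ → S × A → ℝ
  | 0 => fun sa => (ρ0 sa.1).toReal * ((πseq 0 sa.1) sa.2).toReal
  | t + 1 => fun sa =>
      ∑ s' : S, ∑ a' : A,
        marginal ρ0 πseq pseq t (s', a') * ((pseq t (s', a')) sa.1).toReal *
          ((πseq (t + 1) sa.1) sa.2).toReal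

/-- Discounted return `η = Σ_t γ^t Σ_{s,a} d^t(s,a)·r(s,a)`. -/
noncomputable def ret {S A : Type*} [Fintype S] [Fintype A]
    (γ : ℝ) (r : S × A → ℝ) (d : ℕ → S × A → ℝ) : ℝ :=
  ∑' t : ℕ, γ ^ t * ∑ sa : S × A, d t sa * r sa

/-! Let `d t` be the state-action marginal of `π` under `p` and `b t` that of the branched
process. Both satisfy the recursion "push the marginal through the dynamics, then attach the
policy". Pushing two measures through the same kernel and policy does not increase their total
variation distance; swapping the dynamics `p ↦ p̂` at a step costs `E_{d t}[TV(p, p̂)] ≤ εm'`,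
and swapping the policy `π ↦ πD` costs at most `επ`. Hence
`TV(d t, b t) ≤ min t k · εm' + (t + 1 - k)⁺ · επ`. Since
`|η[d] - η[b]| ≤ 2 rmax Σ_t γ^t TV(d t, b t)`, summing with
`Σ_t γ^t (t + 1 - k)⁺ = γ^k / (1 - γ)²` gives the bound. -/

open Finset

lemma PMF.sum_toReal {X : Type*} [Fintype X] (q : PMF X) : ∑ x, (q x).toReal = 1 := by
  have h := q.tsum_coe
  rw [tsum_fintype] at h
  rw [← ENNReal.toReal_sum fun x _ => q.apply_ne_top x, h, ENNReal.toReal_one]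

section TotalVariation

variable {X : Type*} [Fintype X]

lemma tv_nonneg (q1 q2 : PMF X) : 0 ≤ tv q1 q2 := by
  unfold tv; positivity

lemma tv_self (q : PMF X) : tv q q = 0 := by
  simp [tv]

lemma tv_comm (q1 q2 : PMF X) : tv q1 q2 = tv q2 q1 := by
  simp only [tv, abs_sub_comm]

lemma tvFun_triangle (f g h : X → ℝ) : tvFun f h ≤ tvFun f g + tvFun g h := by
  simp only [tvFun, ← mul_add, ← sum_add_distrib]
  gcongr with x
  exact abs_sub_le _ _ _

lemma abs_sum_mul_le {f r : X → ℝ} {rmax : ℝ} (hf : 0 ≤ f) (hf1 : ∑ x, f x = 1)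
    (hr : ∀ x, |r x| ≤ rmax) : |∑ x, f x * r x| ≤ rmax := by
  calc |∑ x, f x * r x| ≤ ∑ x, f x * rmax := by
        refine (abs_sum_le_sum_abs _ _).trans (sum_le_sum fun x _ => ?_)
        rw [abs_mul, abs_of_nonneg (hf x)]
        exact mul_le_mul_of_nonneg_left (hr x) (hf x)
    _ = rmax := by rw [← sum_mul, hf1, one_mul]

lemma abs_sum_mul_sub_sum_mul_le {r : X → ℝ} {rmax : ℝ} (hr : ∀ x, |r x| ≤ rmax)
    (f g : X → ℝ) : |∑ x, f x * r x - ∑ x, g x * r x| ≤ 2 * rmax * tvFun f g := by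
  calc |∑ x, f x * r x - ∑ x, g x * r x| ≤ ∑ x, |f x - g x| * rmax := by
        rw [← sum_sub_distrib]
        refine (abs_sum_le_sum_abs _ _).trans (sum_le_sum fun x _ => ?_)
        rw [← sub_mul, abs_mul]
        exact mul_le_mul_of_nonneg_left (hr x) (abs_nonneg _)
    _ = 2 * rmax * tvFun f g := by
        rw [tvFun, ← sum_mul]; ring

end TotalVariation

section Kernel

variable {X Y : Type*} [Fintype X]

noncomputable def nextStateDist (P : X → PMF Y) (f : X → ℝ) (y : Y) : ℝ :=
  ∑ x, f x * (P x y).toReal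

lemma nextStateDist_nonneg (P : X → PMF Y) {f : X → ℝ} (hf : 0 ≤ f) :
    0 ≤ nextStateDist P f :=
  fun _ => sum_nonneg fun x _ => mul_nonneg (hf x) ENNReal.toReal_nonneg

variable [Fintype Y]

lemma sum_nextStateDist (P : X → PMF Y) (f : X → ℝ) :
    ∑ y, nextStateDist P f y = ∑ x, f x := by
  simp only [nextStateDist]
  rw [sum_comm]
  simp only [← mul_sum, PMF.sum_toReal, mul_one]

lemma tvFun_nextStateDist_le (P : X → PMF Y) (f g : X → ℝ) :
    tvFun (nextStateDist P f) (nextStateDist P g) ≤ tvFun f g := by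
  have hpoint : ∀ y, |nextStateDist P f y - nextStateDist P g y| ≤
      nextStateDist P (fun x => |f x - g x|) y := by
    intro y
    simp only [nextStateDist, ← sum_sub_distrib, ← sub_mul]
    refine (abs_sum_le_sum_abs _ _).trans_eq (sum_congr rfl fun x _ => ?_)
    rw [abs_mul, abs_of_nonneg ENNReal.toReal_nonneg]
  simp only [tvFun]
  rw [← sum_nextStateDist P (fun x => |f x - g x|)]
  gcongr with y
  exact hpoint y

lemma tvFun_nextStateDist_kernel_le (P Q : X → PMF Y) {f : X → ℝ} (hf : 0 ≤ f) :
    tvFun (nextStateDist P f) (nextStateDist Q f) ≤ ∑ x, f x * tv (P x) (Q x) := by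
  simp only [tvFun, tv, nextStateDist, ← sum_sub_distrib, ← mul_sub]
  calc 1 / 2 * ∑ y, |∑ x, f x * ((P x y).toReal - (Q x y).toReal)|
      ≤ 1 / 2 * ∑ y, ∑ x, f x * |(P x y).toReal - (Q x y).toReal| := by
        gcongr with y
        refine (abs_sum_le_sum_abs _ _).trans_eq (sum_congr rfl fun x _ => ?_)
        rw [abs_mul, abs_of_nonneg (hf x)]
    _ = ∑ x, f x * (1 / 2 * ∑ y, |(P x y).toReal - (Q x y).toReal|) := by
        rw [sum_comm, mul_sum]
        refine sum_congr rfl fun x _ => ?_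
        rw [← mul_sum]; ring

end Kernel

section Policy

variable {Y A : Type*}

noncomputable def withPolicy (π : Y → PMF A) (μ : Y → ℝ) (ya : Y × A) : ℝ :=
  μ ya.1 * (π ya.1 ya.2).toReal

lemma withPolicy_nonneg (π : Y → PMF A) {μ : Y → ℝ} (hμ : 0 ≤ μ) :
    0 ≤ withPolicy π μ :=
  fun _ => mul_nonneg (hμ _) ENNReal.toReal_nonneg

variable [Fintype Y] [Fintype A]

lemma sum_withPolicy (π : Y → PMF A) (μ : Y → ℝ) :
    ∑ ya, withPolicy π μ ya = ∑ y, μ y := by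
  simp only [withPolicy, Fintype.sum_prod_type, ← mul_sum, PMF.sum_toReal, mul_one]

lemma tvFun_withPolicy (π : Y → PMF A) (μ ν : Y → ℝ) :
    tvFun (withPolicy π μ) (withPolicy π ν) = tvFun μ ν := by
  have hpoint : ∀ ya, |withPolicy π μ ya - withPolicy π ν ya| =
      withPolicy π (fun y => |μ y - ν y|) ya := by
    intro ya
    simp only [withPolicy, ← sub_mul, abs_mul, abs_of_nonneg ENNReal.toReal_nonneg]
  simp only [tvFun, hpoint, sum_withPolicy]

lemma tvFun_withPolicy_le (π π' : Y → PMF A) {μ : Y → ℝ} (hμ : 0 ≤ μ) {c : ℝ}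
    (hc : ∀ y, tv (π y) (π' y) ≤ c) :
    tvFun (withPolicy π μ) (withPolicy π' μ) ≤ c * ∑ y, μ y := by
  calc tvFun (withPolicy π μ) (withPolicy π' μ) = ∑ y, μ y * tv (π y) (π' y) := by
        simp only [tvFun, tv, withPolicy, Fintype.sum_prod_type, ← mul_sub, abs_mul, mul_sum]
        refine sum_congr rfl fun y _ => sum_congr rfl fun a _ => ?_
        rw [abs_of_nonneg (hμ y)]; ring
    _ ≤ ∑ y, μ y * c := sum_le_sum fun y _ => mul_le_mul_of_nonneg_left (hc y) (hμ y)
    _ = c * ∑ y, μ y := by rw [← sum_mul, mul_comm]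

end Policy

section Marginal

variable {S A : Type*} [Fintype S] [Fintype A] (ρ0 : PMF S)

lemma marginal_zero (πseq : ℕ → S → PMF A) (pseq : ℕ → S × A → PMF S) :
    marginal ρ0 πseq pseq 0 = withPolicy (πseq 0) (fun s => (ρ0 s).toReal) :=
  rfl

lemma marginal_succ (πseq : ℕ → S → PMF A) (pseq : ℕ → S × A → PMF S) (t : ℕ) :
    marginal ρ0 πseq pseq (t + 1) =
      withPolicy (πseq (t + 1)) (nextStateDist (pseq t) (marginal ρ0 πseq pseq t)) := by
  funext sa
  simp only [marginal, withPolicy, nextStateDist, Fintype.sum_prod_type, sum_mul]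

lemma marginal_nonneg (πseq : ℕ → S → PMF A) (pseq : ℕ → S × A → PMF S) (t : ℕ) :
    0 ≤ marginal ρ0 πseq pseq t := by
  induction t with
  | zero => exact withPolicy_nonneg _ fun _ => ENNReal.toReal_nonneg
  | succ t ih => rw [marginal_succ]; exact withPolicy_nonneg _ (nextStateDist_nonneg _ ih)

lemma sum_marginal (πseq : ℕ → S → PMF A) (pseq : ℕ → S × A → PMF S) (t : ℕ) :
    ∑ sa, marginal ρ0 πseq pseq t sa = 1 := by
  induction t with
  | zero => rw [marginal_zero, sum_withPolicy, PMF.sum_toReal]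
  | succ t ih => rw [marginal_succ, sum_withPolicy, sum_nextStateDist, ih]

variable (π1 π2 : ℕ → S → PMF A) (p1 p2 : ℕ → S × A → PMF S)

lemma tvFun_marginal_zero_le {c : ℝ} (hc : ∀ s, tv (π1 0 s) (π2 0 s) ≤ c) :
    tvFun (marginal ρ0 π1 p1 0) (marginal ρ0 π2 p2 0) ≤ c := by
  simpa [marginal_zero, PMF.sum_toReal] using
    tvFun_withPolicy_le (π1 0) (π2 0) (fun s => ENNReal.toReal_nonneg (a := ρ0 s)) hc

lemma tvFun_marginal_succ_le (t : ℕ) {c : ℝ}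
    (hc : ∀ s, tv (π1 (t + 1) s) (π2 (t + 1) s) ≤ c) :
    tvFun (marginal ρ0 π1 p1 (t + 1)) (marginal ρ0 π2 p2 (t + 1)) ≤
      tvFun (marginal ρ0 π1 p1 t) (marginal ρ0 π2 p2 t) +
        ∑ sa, marginal ρ0 π1 p1 t sa * tv (p1 t sa) (p2 t sa) + c := by
  have hm1 := marginal_nonneg ρ0 π1 p1 t
  have hm2 := marginal_nonneg ρ0 π2 p2 t
  have hstate : tvFun (nextStateDist (p1 t) (marginal ρ0 π1 p1 t))
      (nextStateDist (p2 t) (marginal ρ0 π2 p2 t)) ≤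
        tvFun (marginal ρ0 π1 p1 t) (marginal ρ0 π2 p2 t) +
          ∑ sa, marginal ρ0 π1 p1 t sa * tv (p1 t sa) (p2 t sa) := by
    refine (tvFun_triangle _ (nextStateDist (p2 t) (marginal ρ0 π1 p1 t)) _).trans ?_
    linarith [tvFun_nextStateDist_kernel_le (p1 t) (p2 t) hm1,
      tvFun_nextStateDist_le (p2 t) (marginal ρ0 π1 p1 t) (marginal ρ0 π2 p2 t)]
  have hpolicy :=
    tvFun_withPolicy_le (π1 (t + 1)) (π2 (t + 1)) (nextStateDist_nonneg (p2 t) hm2) hc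
  rw [sum_nextStateDist, sum_marginal, mul_one] at hpolicy
  rw [marginal_succ, marginal_succ]
  refine (tvFun_triangle _
    (withPolicy (π1 (t + 1)) (nextStateDist (p2 t) (marginal ρ0 π2 p2 t))) _).trans ?_
  rw [tvFun_withPolicy]
  linarith

end Marginal

section Return

variable {S A : Type*} [Fintype S] [Fintype A] (ρ0 : PMF S) {r : S × A → ℝ} {rmax γ : ℝ}

lemma summable_ret_marginal (πseq : ℕ → S → PMF A) (pseq : ℕ → S × A → PMF S)
    (hr : ∀ sa, |r sa| ≤ rmax) (hγ : |γ| < 1) :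
    Summable fun t => γ ^ t * ∑ sa, marginal ρ0 πseq pseq t sa * r sa := by
  refine Summable.of_norm_bounded ((summable_geometric_of_abs_lt_one hγ).abs.mul_left rmax)
    fun t => ?_
  rw [Real.norm_eq_abs, abs_mul, abs_pow, mul_comm]
  gcongr
  exact abs_sum_mul_le (marginal_nonneg ρ0 πseq pseq t) (sum_marginal ρ0 πseq pseq t) hr

lemma ret_sub_ret_le (π1 π2 : ℕ → S → PMF A) (p1 p2 : ℕ → S × A → PMF S)
    (hrmax : 0 ≤ rmax) (hr : ∀ sa, |r sa| ≤ rmax) (hγ0 : 0 ≤ γ) (hγ1 : γ < 1)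
    {B : ℕ → ℝ} (hB : Summable fun t => γ ^ t * B t)
    (hdist : ∀ t, tvFun (marginal ρ0 π1 p1 t) (marginal ρ0 π2 p2 t) ≤ B t) :
    ret γ r (marginal ρ0 π2 p2) - ret γ r (marginal ρ0 π1 p1) ≤
      2 * rmax * ∑' t, γ ^ t * B t := by
  have hγ : |γ| < 1 := abs_lt.2 ⟨by linarith, hγ1⟩
  have h1 := summable_ret_marginal ρ0 π1 p1 hr hγ
  have h2 := summable_ret_marginal ρ0 π2 p2 hr hγ
  rw [ret, ret, ← h2.tsum_sub h1, ← tsum_mul_left]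
  refine (h2.sub h1).tsum_le_tsum (fun t => ?_) (hB.mul_left _)
  have hdiff :=
    (abs_sum_mul_sub_sum_mul_le hr (marginal ρ0 π1 p1 t) (marginal ρ0 π2 p2 t)).trans
      (mul_le_mul_of_nonneg_left (hdist t) (by positivity))
  rw [abs_sub_comm] at hdiff
  rw [← mul_sub]
  linarith [mul_le_mul_of_nonneg_left ((le_abs_self _).trans hdiff) (pow_nonneg hγ0 t)]

end Return

lemma hasSum_pow_mul_natSub {γ : ℝ} (hγ : |γ| < 1) (k : ℕ) :
    HasSum (fun t : ℕ => γ ^ t * ((t + 1 - k : ℕ) : ℝ)) (γ ^ k / (1 - γ) ^ 2) := by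
  rw [← hasSum_nat_add_iff' k]
  have hhead : ∑ i ∈ range k, γ ^ i * ((i + 1 - k : ℕ) : ℝ) = 0 :=
    sum_eq_zero fun i hi => by rw [Nat.sub_eq_zero_of_le (mem_range.1 hi)]; simp
  rw [hhead, sub_zero]
  have h := ((hasSum_choose_mul_geometric_of_norm_lt_one 1 (Real.norm_eq_abs γ ▸ hγ)).mul_left
    (γ ^ k)).congr_fun (g := fun i => γ ^ (i + k) * ((i + k + 1 - k : ℕ) : ℝ)) fun i => by
      rw [Nat.choose_one_right, show i + k + 1 - k = i + 1 by omega, pow_add]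
      push_cast; ring
  rwa [show γ ^ k * (1 / (1 - γ) ^ (1 + 1)) = γ ^ k / (1 - γ) ^ 2 by ring] at h

section Branch

variable {S A : Type*} [Fintype S] [Fintype A] (p phat : S × A → PMF S) (πD π : S → PMF A)
  (ρ0 : PMF S) (k : ℕ)

-- `t + 1 - k` is truncated subtraction: the number of times `≤ t` at which `πD` acts.
lemma tvFun_marginal_branch_le {εm' επ : ℝ}
    (hεm' : ∀ t : ℕ, ∑ sa : S × A,
      marginal ρ0 (fun _ => π) (fun _ => p) t sa * tv (p sa) (phat sa) ≤ εm')
    (hεπ : ∀ s : S, tv (πD s) (π s) ≤ επ) (t : ℕ) :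
    tvFun (marginal ρ0 (fun _ => π) (fun _ => p) t)
        (marginal ρ0 (fun t => if t < k then π else πD)
          (fun t => if t < k then phat else p) t) ≤
      ((min t k : ℕ) : ℝ) * εm' + ((t + 1 - k : ℕ) : ℝ) * επ := by
  have hpolicy : ∀ n s,
      tv (π s) ((if n < k then π else πD) s) ≤ if n < k then 0 else επ := by
    intro n s
    split_ifs
    · exact (tv_self _).le
    · rw [tv_comm]; exact hεπ s
  have hmodel : ∀ n, ∑ sa, marginal ρ0 (fun _ => π) (fun _ => p) n sa *
      tv (p sa) ((if n < k then phat else p) sa) ≤ if n < k then εm' else 0 := by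
    intro n
    split_ifs
    · exact hεm' n
    · simp [tv_self]
  induction t with
  | zero =>
    refine (tvFun_marginal_zero_le ρ0 (fun _ => π) (fun t => if t < k then π else πD)
      (fun _ => p) (fun t => if t < k then phat else p) (hpolicy 0)).trans_eq ?_
    split_ifs with hk
    · simp [Nat.sub_eq_zero_of_le hk]
    · simp [Nat.eq_zero_of_not_pos hk]
  | succ n ih =>
    refine (tvFun_marginal_succ_le ρ0 (fun _ => π) (fun t => if t < k then π else πD)
      (fun _ => p) (fun t => if t < k then phat else p) n (hpolicy (n + 1))).trans ?_
    have hmin : ((min (n + 1) k : ℕ) : ℝ) = (min n k : ℕ) + if n < k then 1 else 0 := by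
      split_ifs <;> norm_cast <;> omega
    have hsub : ((n + 1 + 1 - k : ℕ) : ℝ) = (n + 1 - k : ℕ) + if n + 1 < k then 0 else 1 := by
      split_ifs <;> norm_cast <;> omega
    have := hmodel n
    rw [hmin, hsub]
    split_ifs at * <;> linarith

end Branch

theorem mbpo_branched_bound_current_policy_general
    {S A : Type*} [Fintype S] [Fintype A]
    (p phat : S × A → PMF S) (πD π : S → PMF A) (ρ0 : PMF S)
    (r : S × A → ℝ) (rmax : ℝ) (hrmax : 0 ≤ rmax) (hr : ∀ sa : S × A, |r sa| ≤ rmax)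
    (γ : ℝ) (hγ0 : 0 < γ) (hγ1 : γ < 1) (k : ℕ) (εm' επ : ℝ)
    (hεm' : ∀ t : ℕ, ∑ sa : S × A,
      marginal ρ0 (fun _ => π) (fun _ => p) t sa * tv (p sa) (phat sa) ≤ εm')
    (hεπ : ∀ s : S, tv (πD s) (π s) ≤ επ) :
    ret γ r (marginal ρ0 (fun _ => π) (fun _ => p)) ≥
      ret γ r (marginal ρ0
          (fun t => if t < k then π else πD) (fun t => if t < k then phat else p)) -
        2 * rmax * (γ ^ (k + 1) * επ / (1 - γ) ^ 2 + γ ^ k * επ / (1 - γ) +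
          (k : ℝ) * εm' / (1 - γ)) := by
  have hγ : |γ| < 1 := abs_lt.2 ⟨by linarith, hγ1⟩
  have hεm'0 : 0 ≤ εm' := (sum_nonneg fun sa _ =>
    mul_nonneg (marginal_nonneg _ _ _ 0 sa) (tv_nonneg _ _)).trans (hεm' 0)
  have hB : HasSum (fun t : ℕ => γ ^ t * ((k : ℝ) * εm' + ((t + 1 - k : ℕ) : ℝ) * επ))
      ((1 - γ)⁻¹ * ((k : ℝ) * εm') + γ ^ k / (1 - γ) ^ 2 * επ) := by
    refine (((hasSum_geometric_of_abs_lt_one hγ).mul_right ((k : ℝ) * εm')).add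
      ((hasSum_pow_mul_natSub hγ k).mul_right επ)).congr_fun fun t => ?_
    ring
  have hdist : ∀ t, tvFun (marginal ρ0 (fun _ => π) (fun _ => p) t)
      (marginal ρ0 (fun t => if t < k then π else πD) (fun t => if t < k then phat else p) t) ≤
        (k : ℝ) * εm' + ((t + 1 - k : ℕ) : ℝ) * επ := fun t =>
    (tvFun_marginal_branch_le p phat πD π ρ0 k hεm' hεπ t).trans (by
      gcongr; exact_mod_cast min_le_right t k)
  have hret := ret_sub_ret_le ρ0 _ _ _ _ hrmax hr hγ0.le hγ1 hB.summable hdist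
  have hsum : (1 - γ)⁻¹ * ((k : ℝ) * εm') + γ ^ k / (1 - γ) ^ 2 * επ =
      γ ^ (k + 1) * επ / (1 - γ) ^ 2 + γ ^ k * επ / (1 - γ) +
        (k : ℝ) * εm' / (1 - γ) := by
    field_simp [(by linarith : (1 - γ) ≠ 0)]
    ring
  rw [hB.tsum_eq, hsum] at hret
  linarith

/-- Branched rollout bound with model error under the new policy
(Theorem 4.3 / Theorem A.2). -/
theorem mbpo_branched_bound_current_policy
    {S A : Type*} [Fintype S] [Fintype A] [Nonempty S] [Nonempty A]
    (p phat : S × A → PMF S) (πD π : S → PMF A) (ρ0 : PMF S)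
    (r : S × A → ℝ) (rmax : ℝ) (hrmax : 0 ≤ rmax) (hr : ∀ sa : S × A, |r sa| ≤ rmax)
    (γ : ℝ) (hγ0 : 0 < γ) (hγ1 : γ < 1) (k : ℕ) (εm' επ : ℝ)
    (hεm' : ∀ t : ℕ, ∑ sa : S × A,
      marginal ρ0 (fun _ => π) (fun _ => p) t sa * tv (p sa) (phat sa) ≤ εm')
    (hεπ : ∀ s : S, tv (πD s) (π s) ≤ επ) :
    ret γ r (marginal ρ0 (fun _ => π) (fun _ => p)) ≥
      ret γ r (marginal ρ0
          (fun t => if t < k then π else πD) (fun t => if t < k then phat else p)) -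
        2 * rmax * (γ ^ (k + 1) * επ / (1 - γ) ^ 2 + γ ^ k * επ / (1 - γ) +
          (k : ℝ) * εm' / (1 - γ)) :=
  mbpo_branched_bound_current_policy_general p phat πD π ρ0 r rmax hrmax hr γ hγ0 hγ1 k εm' επ hεm'
    hεπ
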